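/- arXiv:0801.4240 — 3 statements merged into one kernel-verified Lean document; each statement's English description precedes it below -/
import Mathlib

section
/- Equilibrium identity for Maxwell molecules: for every bounded measurable function ψ : ℝ³ → ℝ, the integral ∫_{ℝ³×ℝ³×S²} |q̃·n| · M(v) · M₁(w) · (ψ(v⋆) − ψ(v)) dn dw dv equals 0. (In other words, the Maxwellian M with temperature Θ# is an equilibrium of the linear inelastic Boltzmann operator with Maxwell-molecules kernel, in weak form.) -/
/-!
For fixed `n`, the map `(v, w) ↦ (v⋆, w + 2(1-κ)(q·n)n)` is a linear involution of `ℝ³ × ℝ³`,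
so its determinant is `±1` and it preserves Lebesgue measure; hence it induces a measure-preserving
involution of `ℝ³ × ℝ³ × S²`. It maps `q` to its reflection in `n^⊥`, so it fixes the kernel and
sends `v⋆` back to `v`; and since `Θ#` is exactly the temperature with `κ m / Θ# = (1-κ) m₁ / Θ₁`,
it conserves `(m/Θ#)|v-u₁|² + (m₁/Θ₁)|w-u₁|²`, hence fixes `M(v) M₁(w)`. The integrand therefore
changes sign under the involution, so its integral vanishes.
-/

open MeasureTheory Metric Real
open scoped RealInnerProductSpace ENNReal

noncomputable section

/-- `ℝ³` as a Euclidean space. -/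
abbrev E3 := EuclideanSpace ℝ (Fin 3)

/-- The unit sphere `S² ⊂ ℝ³`. -/
abbrev Sph := Metric.sphere (0 : E3) 1

/-- The surface measure on the unit sphere `S² ⊂ ℝ³`. -/
noncomputable def sphMeasure : Measure Sph := (volume : Measure E3).toSphere

/-- The product measure on `ℝ³ × ℝ³ × S²` (velocities `v`, `w` and impact direction `n`). -/
noncomputable def colProd : Measure (E3 × E3 × Sph) :=
  (volume : Measure E3).prod ((volume : Measure E3).prod sphMeasure)

/-- The Maxwellian with mass `m`, temperature `Θ` and bulk velocity `u`:
`(m/(2πΘ))^(3/2) exp(-m|v-u|²/(2Θ))`. -/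
noncomputable def maxwellian (m Θ : ℝ) (u v : E3) : ℝ :=
  (m / (2 * π * Θ)) ^ ((3 : ℝ) / 2) * Real.exp (- m * ‖v - u‖ ^ 2 / (2 * Θ))

/-- The post-collisional velocity `v⋆ = v - 2κ (q·n) n`, with `q = v - w`. -/
noncomputable def vstar (κ : ℝ) (v w : E3) (n : Sph) : E3 :=
  v - (2 * κ * ⟪v - w, (n : E3)⟫) • (n : E3)

/-- The hard-spheres collision kernel `|q·n|`, `q = v - w`. -/
noncomputable def khs (v w : E3) (n : Sph) : ℝ := |⟪v - w, (n : E3)⟫|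

/-- The Maxwell-molecules collision kernel `|q̃·n|`, `q̃ = q/|q|`, `q = v - w`
(arbitrary, i.e. `0`, when `q = 0`). -/
noncomputable def kmax (v w : E3) (n : Sph) : ℝ := |⟪‖v - w‖⁻¹ • (v - w), (n : E3)⟫|

lemma LinearMap.measurePreserving_of_involutive {W : Type*} [NormedAddCommGroup W]
    [NormedSpace ℝ W] [MeasurableSpace W] [BorelSpace W] [FiniteDimensional ℝ W]
    (μ : Measure W) [μ.IsAddHaarMeasure] {f : W →ₗ[ℝ] W} (hf : Function.Involutive f) :
    MeasurePreserving f μ μ := by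
  have hdet : LinearMap.det f * LinearMap.det f = 1 := by
    rw [← LinearMap.det_comp, show f ∘ₗ f = LinearMap.id from LinearMap.ext hf, LinearMap.det_id]
  have habs : |(LinearMap.det f)⁻¹| = 1 := by
    rw [← abs_mul_abs_self, mul_self_eq_one_iff] at hdet
    rw [abs_inv, hdet.resolve_right (by linarith [abs_nonneg (LinearMap.det f)]), inv_one]
  refine ⟨f.continuous_of_finiteDimensional.measurable, ?_⟩
  rw [Measure.map_linearMap_addHaar_eq_smul_addHaar μ (left_ne_zero_of_mul_eq_one hdet), habs,
    ENNReal.ofReal_one, one_smul]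

lemma MeasureTheory.MeasurePreserving.prod_fiberwise {α β : Type*} [MeasurableSpace α]
    [MeasurableSpace β] {μ : Measure α} {ν : Measure β} [SFinite μ] [SFinite ν] {g : β → α → α}
    (hg : Measurable (Function.uncurry g)) (hμ : ∀ b, MeasurePreserving (g b) μ μ) :
    MeasurePreserving (fun p : α × β => (g p.2 p.1, p.2)) (μ.prod ν) (μ.prod ν) := by
  have hskew := (MeasurePreserving.id ν).skew_product (μc := μ) (μd := μ) hg
    (Filter.Eventually.of_forall fun b => (hμ b).map_eq)
  exact (Measure.measurePreserving_swap.comp hskew).comp Measure.measurePreserving_swap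

lemma MeasureTheory.integral_eq_zero_of_involutive {α E : Type*} [MeasurableSpace α]
    [NormedAddCommGroup E] [NormedSpace ℝ E] {μ : Measure α} {f : α → α}
    (hf : Function.Involutive f) (hμ : MeasurePreserving f μ μ) {F : α → E} (hF : ∀ x, F (f x) = -F x) :
    ∫ x, F x ∂μ = 0 := by
  have h := (hμ.integral_comp' (f := MeasurableEquiv.ofInvolutive f hf hμ.measurable) F)
  simp only [MeasurableEquiv.ofInvolutive_apply, hF, integral_neg] at h
  have := IsAddTorsionFree.of_isTorsionFree ℝ E
  exact neg_eq_self.mp h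

section Collision

variable {V : Type*} [NormedAddCommGroup V] [InnerProductSpace ℝ V]

lemma inner_sub_two_inner_smul {n : V} (hn : ‖n‖ = 1) (q : V) :
    ⟪q - (2 * ⟪q, n⟫) • n, n⟫ = -⟪q, n⟫ := by
  rw [inner_sub_left, real_inner_smul_left, real_inner_self_eq_norm_sq, hn]
  ring

lemma norm_sub_two_inner_smul {n : V} (hn : ‖n‖ = 1) (q : V) :
    ‖q - (2 * ⟪q, n⟫) • n‖ = ‖q‖ := by
  refine sq_eq_sq₀ (norm_nonneg _) (norm_nonneg _) |>.mp ?_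
  rw [norm_sub_sq_real, real_inner_smul_right, norm_smul, hn, Real.norm_eq_abs, mul_one, sq_abs]
  ring

def collisionMap (κ : ℝ) (n : V) : V × V →ₗ[ℝ] V × V where
  toFun p := (p.1 - (2 * κ * ⟪p.1 - p.2, n⟫) • n, p.2 + (2 * (1 - κ) * ⟪p.1 - p.2, n⟫) • n)
  map_add' p p' := by
    simp only [Prod.fst_add, Prod.snd_add, inner_add_left, inner_sub_left, Prod.mk_add_mk]
    congr 1 <;> module
  map_smul' c p := by
    simp only [Prod.smul_fst, Prod.smul_snd, RingHom.id_apply, ← smul_sub, real_inner_smul_left,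
      Prod.smul_mk]
    congr 1 <;> module

lemma collisionMap_apply (κ : ℝ) (n : V) (p : V × V) :
    collisionMap κ n p =
      (p.1 - (2 * κ * ⟪p.1 - p.2, n⟫) • n, p.2 + (2 * (1 - κ) * ⟪p.1 - p.2, n⟫) • n) :=
  rfl

lemma collisionMap_fst_sub_snd (κ : ℝ) (n : V) (p : V × V) :
    (collisionMap κ n p).1 - (collisionMap κ n p).2 = (p.1 - p.2) - (2 * ⟪p.1 - p.2, n⟫) • n := by
  simp only [collisionMap_apply]
  module

lemma inner_collisionMap_fst_sub_snd (κ : ℝ) {n : V} (hn : ‖n‖ = 1) (p : V × V) :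
    ⟪(collisionMap κ n p).1 - (collisionMap κ n p).2, n⟫ = -⟪p.1 - p.2, n⟫ := by
  rw [collisionMap_fst_sub_snd, inner_sub_two_inner_smul hn]

lemma collisionMap_involutive (κ : ℝ) {n : V} (hn : ‖n‖ = 1) :
    Function.Involutive (collisionMap κ n) := by
  intro p
  conv_lhs => rw [collisionMap_apply, inner_collisionMap_fst_sub_snd κ hn]
  simp only [collisionMap_apply]
  ext <;> simp only <;> module

lemma collisionMap_energy (κ : ℝ) {n : V} (hn : ‖n‖ = 1) {a b : ℝ} (hab : a * κ = b * (1 - κ))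
    (u : V) (p : V × V) :
    a * ‖(collisionMap κ n p).1 - u‖ ^ 2 + b * ‖(collisionMap κ n p).2 - u‖ ^ 2 =
      a * ‖p.1 - u‖ ^ 2 + b * ‖p.2 - u‖ ^ 2 := by
  have h1 : (collisionMap κ n p).1 - u = (p.1 - u) - (2 * κ * ⟪p.1 - p.2, n⟫) • n := by
    rw [collisionMap_apply]; module
  have h2 : (collisionMap κ n p).2 - u = (p.2 - u) + (2 * (1 - κ) * ⟪p.1 - p.2, n⟫) • n := by
    rw [collisionMap_apply]; module
  have hq : ⟪p.1 - p.2, n⟫ = ⟪p.1 - u, n⟫ - ⟪p.2 - u, n⟫ := by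
    rw [← inner_sub_left, sub_sub_sub_cancel_right]
  rw [h1, h2, norm_sub_sq_real, norm_add_sq_real, real_inner_smul_right, real_inner_smul_right,
    norm_smul, norm_smul, hn, Real.norm_eq_abs, Real.norm_eq_abs, mul_one, mul_one, sq_abs, sq_abs,
    hq]
  linear_combination 4 * (⟪p.1 - u, n⟫ - ⟪p.2 - u, n⟫) *
    (κ * (⟪p.1 - u, n⟫ - ⟪p.2 - u, n⟫) - ⟪p.1 - u, n⟫) * hab

end Collision

instance : IsFiniteMeasure sphMeasure := by unfold sphMeasure; infer_instance

def collision (κ : ℝ) (p : E3 × E3 × Sph) : E3 × E3 × Sph :=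
  ((collisionMap κ (p.2.2 : E3) (p.1, p.2.1)).1, (collisionMap κ (p.2.2 : E3) (p.1, p.2.1)).2,
    p.2.2)

lemma norm_coe_sph (n : Sph) : ‖(n : E3)‖ = 1 := mem_sphere_zero_iff_norm.mp n.2

lemma collision_involutive (κ : ℝ) : Function.Involutive (collision κ) := by
  rintro ⟨v, w, n⟩
  simp only [collision, Prod.mk.eta, collisionMap_involutive κ (norm_coe_sph n) (v, w)]

lemma measurePreserving_collision (κ : ℝ) : MeasurePreserving (collision κ) colProd colProd := by
  have hHaar : (volume : Measure (E3 × E3)).IsAddHaarMeasure := by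
    rw [Measure.volume_eq_prod]; infer_instance
  have hcont : Continuous fun q : Sph × (E3 × E3) => collisionMap κ (q.1 : E3) q.2 := by
    simp only [collisionMap_apply]; fun_prop
  have hfib := MeasurePreserving.prod_fiberwise (μ := (volume : Measure (E3 × E3)))
    (ν := sphMeasure) (g := fun n p => collisionMap κ (n : E3) p) hcont.measurable
    fun n => LinearMap.measurePreserving_of_involutive volume
      (collisionMap_involutive κ (norm_coe_sph n))
  have hassoc : MeasurePreserving (MeasurableEquiv.prodAssoc : (E3 × E3) × Sph ≃ᵐ E3 × E3 × Sph)
      ((volume.prod volume).prod sphMeasure) colProd :=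
    measurePreserving_prodAssoc _ _ _
  rw [Measure.volume_eq_prod] at hfib
  have h := (hassoc.comp hfib).comp hassoc.symm
  have hfun : (⇑MeasurableEquiv.prodAssoc ∘ fun p : (E3 × E3) × Sph =>
      (collisionMap κ (p.2 : E3) p.1, p.2)) ∘ ⇑MeasurableEquiv.prodAssoc.symm = collision κ :=
    rfl
  exact hfun ▸ h

lemma kmax_collisionMap (κ : ℝ) (p : E3 × E3) (n : Sph) :
    kmax (collisionMap κ (n : E3) p).1 (collisionMap κ (n : E3) p).2 n = kmax p.1 p.2 n := by
  have hn := norm_coe_sph n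
  rw [kmax, kmax, real_inner_smul_left, real_inner_smul_left, inner_collisionMap_fst_sub_snd κ hn,
    collisionMap_fst_sub_snd, norm_sub_two_inner_smul hn, mul_neg, abs_neg]

lemma vstar_eq_collisionMap_fst (κ : ℝ) (v w : E3) (n : Sph) :
    vstar κ v w n = (collisionMap κ (n : E3) (v, w)).1 :=
  rfl

lemma maxwellian_mul_maxwellian_collisionMap {m m1 Θ Θ1 κ : ℝ}
    (hbal : m / Θ * κ = m1 / Θ1 * (1 - κ)) (u : E3) (p : E3 × E3) (n : Sph) :
    maxwellian m Θ u (collisionMap κ (n : E3) p).1 *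
        maxwellian m1 Θ1 u (collisionMap κ (n : E3) p).2 =
      maxwellian m Θ u p.1 * maxwellian m1 Θ1 u p.2 := by
  have hE := collisionMap_energy κ (norm_coe_sph n) hbal u p
  have hexp : ∀ a b : E3, Real.exp (-m * ‖a - u‖ ^ 2 / (2 * Θ)) *
      Real.exp (-m1 * ‖b - u‖ ^ 2 / (2 * Θ1)) =
      Real.exp (-(m / Θ * ‖a - u‖ ^ 2 + m1 / Θ1 * ‖b - u‖ ^ 2) / 2) := by
    intro a b
    rw [← Real.exp_add]
    congr 1
    ring
  simp only [maxwellian]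
  rw [mul_mul_mul_comm, hexp, mul_mul_mul_comm, hexp, hE]

lemma temperature_balance {m m1 Θ1 α β κ Θs : ℝ} (hm : 0 < m) (hm1 : 0 < m1) (hβ : β ≠ 1)
    (hα : α = m1 / (m + m1)) (hκ : κ = α * (1 - β))
    (hΘs : Θs = (1 - α) * (1 - β) * Θ1 / (1 - α * (1 - β))) :
    m / Θs * κ = m1 / Θ1 * (1 - κ) := by
  have h1α : 1 - α = m / (m + m1) := by
    rw [hα]; field_simp; ring
  have hmα : m * α = m1 * (1 - α) := by
    rw [h1α, hα]; ring
  have h1α0 : 1 - α ≠ 0 := by rw [h1α]; positivity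
  have h1β0 : 1 - β ≠ 0 := sub_ne_zero.mpr hβ.symm
  rw [hΘs, div_div_eq_mul_div, hκ]
  field_simp
  rw [hmα]
  ring

theorem maxwellian_equilibrium_maxwell_molecules_general
    (m m1 e Θ1 : ℝ) (u1 : E3)
    (hm : 0 < m) (hm1 : 0 < m1) (he : e ∈ Set.Ioo (0 : ℝ) 1)
    (α β κ Θs : ℝ)
    (hα : α = m1 / (m + m1)) (hβ : β = (1 - e) / 2) (hκ : κ = α * (1 - β))
    (hΘs : Θs = (1 - α) * (1 - β) * Θ1 / (1 - α * (1 - β)))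
    (ψ : E3 → ℝ) :
    ∫ p : E3 × E3 × Sph,
        kmax p.1 p.2.1 p.2.2 * maxwellian m Θs u1 p.1 * maxwellian m1 Θ1 u1 p.2.1 *
          (ψ (vstar κ p.1 p.2.1 p.2.2) - ψ p.1) ∂colProd = 0 := by
  have hβ1 : β < 1 := by rw [hβ]; linarith [he.1]
  have hbal := temperature_balance hm hm1 hβ1.ne hα hκ hΘs
  refine integral_eq_zero_of_involutive (collision_involutive κ) (measurePreserving_collision κ) ?_
  rintro ⟨v, w, n⟩
  have hM := maxwellian_mul_maxwellian_collisionMap hbal u1 (v, w) n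
  simp only [collision, vstar_eq_collisionMap_fst, Prod.mk.eta,
    collisionMap_involutive κ (norm_coe_sph n) (v, w), kmax_collisionMap]
  linear_combination (kmax v w n * (ψ v - ψ (collisionMap κ (n : E3) (v, w)).1)) * hM

/-- The Maxwellian `M` with temperature `Θ#` is an equilibrium of the linear
inelastic Boltzmann operator with Maxwell-molecules kernel, in weak form. -/
theorem maxwellian_equilibrium_maxwell_molecules
    (m m1 e Θ1 : ℝ) (u1 : E3)
    (hm : 0 < m) (hm1 : 0 < m1) (he : e ∈ Set.Ioo (0 : ℝ) 1) (hΘ1 : 0 < Θ1)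
    (α β κ Θs : ℝ)
    (hα : α = m1 / (m + m1)) (hβ : β = (1 - e) / 2) (hκ : κ = α * (1 - β))
    (hΘs : Θs = (1 - α) * (1 - β) * Θ1 / (1 - α * (1 - β)))
    (ψ : E3 → ℝ) (hψ : Measurable ψ) (hψb : ∃ C : ℝ, ∀ v : E3, |ψ v| ≤ C) :
    ∫ p : E3 × E3 × Sph,
        kmax p.1 p.2.1 p.2.2 * maxwellian m Θs u1 p.1 * maxwellian m1 Θ1 u1 p.2.1 *
          (ψ (vstar κ p.1 p.2.1 p.2.2) - ψ p.1) ∂colProd = 0 :=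
  maxwellian_equilibrium_maxwell_molecules_general m m1 e Θ1 u1 hm hm1 he α β κ Θs hα hβ hκ hΘs ψ
end
end

section
/- Planar Gaussian convolution cut-off lemma with quantitative radius: let a = m₁/(2Θ₁) and κ ∈ (0,1). For every ρ₀ > 0 there exists ρ₁ > 0 such that for all v̄ ∈ ℝ² and all ξ ∈ [0, ρ₀/(2κ)], ∫_{{w̄ ∈ ℝ² : |w̄−v̄| ≤ ρ₁}} exp(−a|w̄|²)/√(|v̄−w̄|² + ξ²) dw̄ ≤ (1/2) ∫_{ℝ²} exp(−a|w̄|²)/√(|v̄−w̄|² + ξ²) dw̄. Moreover, setting η = √(2Θ₁/m₁)·r₀ where r₀ is the unique positive real with (2/√π)∫₀^{r₀} e^{−t²} dt = 1/2, whenever 0 < ρ₀ < 2κη the radius ρ₁ can be chosen with ρ₁ ≥ √(η² − ρ₀²/(4κ²)). -/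
open MeasureTheory Real

noncomputable section

/-- `ℝ²` as a Euclidean space. -/
abbrev E2 := EuclideanSpace ℝ (Fin 2)

/-!
Translating by `v` and symmetrizing under `u ↦ -u` turns the integrand into
`e^{-a|v|²} cosh (2a⟪v, u⟫) · e^{-a|u|²} / √(|u|² + ξ²)`. Along every ray from the origin the
`cosh` factor is nondecreasing in `r = |u|`, so in polar coordinates it is enough that the radial
density `r e^{-ar²} / √(r² + ξ²)` puts no more mass on `(0, ρ]` than on `(ρ, ∞)`. The substitution
`s = √(r² + ξ²)` turns this density into `e^{aξ²} e^{-as²}`, and the condition becomes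
`∫_ξ^β e^{-as²} ≤ ∫_β^∞ e^{-as²}` with `β = √(ρ² + ξ²)`. The erf condition on `r₀` says that `η` is
the median of `e^{-as²}` on `(0, ∞)`, which gives the condition as soon as `β ≤ η`, that is for
`ρ₁ = √(η² - ρ₀²/(4κ²))`. When `ρ₀ ≥ 2κη` a small radius works: the left side is at most `ρ₁`,
while the right side is bounded below uniformly in `ξ ≤ ρ₀/(2κ)`.
-/

open Set
open scoped ENNReal

section HalfGaussian

variable {a : ℝ}

theorem intervalIntegral_exp_neg_mul_sq_eq_integral_Ioi_of_erf {r₀ η : ℝ} (ha : 0 < a)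
    (herf : 2 / √π * ∫ t in (0 : ℝ)..r₀, exp (-t ^ 2) = 1 / 2) (hη : √a * η = r₀) (hη0 : 0 ≤ η) :
    ∫ s in (0 : ℝ)..η, exp (-a * s ^ 2) = ∫ s in Ioi η, exp (-a * s ^ 2) := by
  have hsa : 0 < √a := sqrt_pos.mpr ha
  have hfront : ∫ s in (0 : ℝ)..η, exp (-a * s ^ 2) = √π / (4 * √a) := by
    have hscale : ∀ s, exp (-a * s ^ 2) = exp (-(√a * s) ^ 2) := fun s => by
      rw [mul_pow, sq_sqrt ha.le, neg_mul]
    simp only [hscale]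
    rw [intervalIntegral.integral_comp_mul_left (fun t => exp (-t ^ 2)) hsa.ne', mul_zero, hη,
      smul_eq_mul]
    field_simp at herf ⊢
    linarith
  have hsplit : ∫ s in Ioi 0, exp (-a * s ^ 2)
      = (∫ s in (0 : ℝ)..η, exp (-a * s ^ 2)) + ∫ s in Ioi η, exp (-a * s ^ 2) := by
    rw [intervalIntegral.integral_of_le hη0, ← setIntegral_union (Ioc_disjoint_Ioi le_rfl)
      measurableSet_Ioi (integrable_exp_neg_mul_sq ha).integrableOn
      (integrable_exp_neg_mul_sq ha).integrableOn, Ioc_union_Ioi_eq_Ioi hη0]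
  rw [integral_gaussian_Ioi, sqrt_div pi_pos.le, hfront] at hsplit
  rw [hfront]
  field_simp at hsplit ⊢
  linarith

theorem intervalIntegral_exp_neg_mul_sq_le_integral_Ioi_of_median {ξ ρ η : ℝ} (ha : 0 < a)
    (hξ : 0 ≤ ξ) (hη0 : 0 ≤ η) (hρξ : ρ ^ 2 + ξ ^ 2 ≤ η ^ 2)
    (hη : ∫ s in (0 : ℝ)..η, exp (-a * s ^ 2) = ∫ s in Ioi η, exp (-a * s ^ 2)) :
    ∫ s in ξ..√(ρ ^ 2 + ξ ^ 2), exp (-a * s ^ 2) ≤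
      ∫ s in Ioi √(ρ ^ 2 + ξ ^ 2), exp (-a * s ^ 2) := by
  set β := √(ρ ^ 2 + ξ ^ 2)
  have hpos : ∀ {μ : Measure ℝ}, 0 ≤ᵐ[μ] fun s => exp (-a * s ^ 2) :=
    Filter.Eventually.of_forall fun s => (exp_pos _).le
  have hβη : β ≤ η := sqrt_le_iff.mpr ⟨hη0, hρξ⟩
  calc ∫ s in ξ..β, exp (-a * s ^ 2) ≤ ∫ s in (0 : ℝ)..η, exp (-a * s ^ 2) :=
        intervalIntegral.integral_mono_interval hξ (le_sqrt_of_sq_le (by nlinarith)) hβη hpos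
          (integrable_exp_neg_mul_sq ha).intervalIntegrable
    _ = ∫ s in Ioi η, exp (-a * s ^ 2) := hη
    _ ≤ ∫ s in Ioi β, exp (-a * s ^ 2) :=
        setIntegral_mono_set (integrable_exp_neg_mul_sq ha).integrableOn hpos
          (Ioi_subset_Ioi hβη).eventuallyLE

theorem exists_pos_forall_intervalIntegral_exp_neg_mul_sq_le_integral_Ioi (ha : 0 < a) (M : ℝ) :
    ∃ ρ > 0, ∀ ξ ∈ Icc 0 M,
      ∫ s in ξ..√(ρ ^ 2 + ξ ^ 2), exp (-a * s ^ 2) ≤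
        ∫ s in Ioi √(ρ ^ 2 + ξ ^ 2), exp (-a * s ^ 2) := by
  -- `ρ` is the minimum of the Gaussian on `[0, M + 2] ⊇ [β, β + 1]`, so it bounds the tail from
  -- below, while the front is an integral of a function `≤ 1` over an interval of length `≤ ρ`.
  set ρ := exp (-a * (M + 2) ^ 2)
  have hρ1 : ρ ≤ 1 := exp_le_one_iff.mpr (by nlinarith [sq_nonneg (M + 2)])
  refine ⟨ρ, exp_pos _, fun ξ ⟨hξ0, hξM⟩ => ?_⟩
  set β := √(ρ ^ 2 + ξ ^ 2)
  have hξβ : ξ ≤ β := le_sqrt_of_sq_le (by nlinarith)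
  have hβ : β ≤ ξ + ρ :=
    sqrt_le_iff.mpr ⟨by positivity, by nlinarith [exp_pos (-a * (M + 2) ^ 2)]⟩
  have hg := integrable_exp_neg_mul_sq ha
  have hfront : ∫ s in ξ..β, exp (-a * s ^ 2) ≤ ρ :=
    calc ∫ s in ξ..β, exp (-a * s ^ 2) ≤ ∫ _ in ξ..β, (1 : ℝ) :=
          intervalIntegral.integral_mono_on hξβ hg.intervalIntegrable intervalIntegrable_const
            fun s _ => exp_le_one_iff.mpr (by nlinarith [sq_nonneg s])
      _ ≤ ρ := by simp only [intervalIntegral.integral_const, smul_eq_mul, mul_one]; linarith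
  have htail : ρ ≤ ∫ s in Ioi β, exp (-a * s ^ 2) :=
    calc ρ = ∫ _ in β..β + 1, ρ := by simp
      _ ≤ ∫ s in β..β + 1, exp (-a * s ^ 2) :=
          intervalIntegral.integral_mono_on (by linarith) intervalIntegrable_const
            hg.intervalIntegrable fun s hs => by
              have hs0 : 0 ≤ s := (hξ0.trans hξβ).trans hs.1
              have hsM : s ≤ M + 2 := by linarith [hs.2]
              exact exp_le_exp.mpr (by nlinarith [mul_le_mul hsM hsM hs0 (by linarith)])
      _ ≤ ∫ s in Ioi β, exp (-a * s ^ 2) := by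
          rw [intervalIntegral.integral_of_le (by linarith)]
          exact setIntegral_mono_set hg.integrableOn
            (Filter.Eventually.of_forall fun s => (exp_pos _).le) Ioc_subset_Ioi_self.eventuallyLE
  exact hfront.trans htail

end HalfGaussian

section RadialSubstitution

variable {a ξ : ℝ}

theorem strictMonoOn_sqrt_sq_add_sq (ξ : ℝ) :
    StrictMonoOn (fun r : ℝ => √(r ^ 2 + ξ ^ 2)) (Ici 0) :=
  fun _ hx _ _ hxy => sqrt_lt_sqrt (by positivity) (by nlinarith [mem_Ici.mp hx])

theorem setLIntegral_radial_eq_image {s : Set ℝ} (hs : MeasurableSet s) (hs0 : s ⊆ Ioi 0) :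
    ∫⁻ r in s, ENNReal.ofReal r * ENNReal.ofReal (exp (-a * r ^ 2) / √(r ^ 2 + ξ ^ 2)) =
      ∫⁻ x in (fun r : ℝ => √(r ^ 2 + ξ ^ 2)) '' s,
        ENNReal.ofReal (exp (a * ξ ^ 2) * exp (-a * x ^ 2)) := by
  have hderiv : ∀ r ∈ s, HasDerivWithinAt (fun r : ℝ => √(r ^ 2 + ξ ^ 2))
      (r / √(r ^ 2 + ξ ^ 2)) s r := fun r hr => by
    have hr : 0 < r := hs0 hr
    exact (((hasDerivAt_pow 2 r).add_const (ξ ^ 2)).sqrt (by positivity)).hasDerivWithinAt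
      |>.congr_deriv (by field_simp; norm_num)
  rw [lintegral_image_eq_lintegral_abs_deriv_mul hs hderiv
    ((strictMonoOn_sqrt_sq_add_sq ξ).injOn.mono fun r hr => mem_Ici.mpr (hs0 hr).le)]
  refine setLIntegral_congr_fun hs fun r hr => ?_
  have hr : 0 < r := hs0 hr
  rw [← ENNReal.ofReal_mul hr.le, ← ENNReal.ofReal_mul (abs_nonneg _),
    abs_of_nonneg (by positivity), sq_sqrt (by positivity), ← exp_add]
  congr 1
  ring_nf

theorem setLIntegral_radial_Ioc_le_Ioi (ha : 0 < a) (hξ : 0 ≤ ξ) {ρ : ℝ} (hρ : 0 < ρ)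
    (h : ∫ s in ξ..√(ρ ^ 2 + ξ ^ 2), exp (-a * s ^ 2) ≤
      ∫ s in Ioi √(ρ ^ 2 + ξ ^ 2), exp (-a * s ^ 2)) :
    ∫⁻ r in Ioc 0 ρ, ENNReal.ofReal r * ENNReal.ofReal (exp (-a * r ^ 2) / √(r ^ 2 + ξ ^ 2)) ≤
      ∫⁻ r in Ioi ρ, ENNReal.ofReal r * ENNReal.ofReal (exp (-a * r ^ 2) / √(r ^ 2 + ξ ^ 2)) := by
  set S := fun r : ℝ => √(r ^ 2 + ξ ^ 2)
  set β := S ρ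
  have hS0 : S 0 = ξ := by simp [S, sqrt_sq hξ]
  have hS := strictMonoOn_sqrt_sq_add_sq ξ
  have hfront : S '' Ioc 0 ρ ⊆ Ioc ξ β := by
    rintro _ ⟨r, ⟨hr0, hrρ⟩, rfl⟩
    exact ⟨hS0 ▸ hS self_mem_Ici hr0.le hr0, hS.monotoneOn hr0.le hρ.le hrρ⟩
  have htail : Ioi β ⊆ S '' Ioi ρ := by
    refine intermediate_value_Ioi (f := S) (by fun_prop)
      (Filter.tendsto_atTop_mono (fun r => le_sqrt_of_sq_le ?_) Filter.tendsto_id)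
    simp only [id]
    nlinarith
  have hg := (integrable_exp_neg_mul_sq ha).const_mul (exp (a * ξ ^ 2))
  have hpos : ∀ {μ : Measure ℝ}, 0 ≤ᵐ[μ] fun x => exp (a * ξ ^ 2) * exp (-a * x ^ 2) :=
    Filter.Eventually.of_forall fun x => by positivity
  rw [setLIntegral_radial_eq_image measurableSet_Ioc fun r hr => hr.1,
    setLIntegral_radial_eq_image measurableSet_Ioi (Ioi_subset_Ioi hρ.le)]
  calc ∫⁻ x in S '' Ioc 0 ρ, ENNReal.ofReal (exp (a * ξ ^ 2) * exp (-a * x ^ 2))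
      ≤ ∫⁻ x in Ioc ξ β, ENNReal.ofReal (exp (a * ξ ^ 2) * exp (-a * x ^ 2)) :=
        lintegral_mono_set hfront
    _ ≤ ∫⁻ x in Ioi β, ENNReal.ofReal (exp (a * ξ ^ 2) * exp (-a * x ^ 2)) := by
        rw [← ofReal_integral_eq_lintegral_ofReal hg.integrableOn hpos,
          ← ofReal_integral_eq_lintegral_ofReal hg.integrableOn hpos, integral_const_mul,
          integral_const_mul, ← intervalIntegral.integral_of_le (hS0 ▸ hS.monotoneOn self_mem_Ici
            (mem_Ici.mpr hρ.le) hρ.le)]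
        gcongr
    _ ≤ ∫⁻ x in S '' Ioi ρ, ENNReal.ofReal (exp (a * ξ ^ 2) * exp (-a * x ^ 2)) :=
        lintegral_mono_set htail

end RadialSubstitution

theorem setLIntegral_Ioc_mul_le_Ioi_mul_of_monotoneOn {μ : Measure ℝ} {φ h : ℝ → ℝ≥0∞}
    (hφ : Measurable φ) {c ρ : ℝ} (hh : MonotoneOn h (Ioi c)) (hρ : c < ρ)
    (hφρ : ∫⁻ r in Ioc c ρ, φ r ∂μ ≤ ∫⁻ r in Ioi ρ, φ r ∂μ) :
    ∫⁻ r in Ioc c ρ, φ r * h r ∂μ ≤ ∫⁻ r in Ioi ρ, φ r * h r ∂μ :=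
  calc ∫⁻ r in Ioc c ρ, φ r * h r ∂μ ≤ ∫⁻ r in Ioc c ρ, φ r * h ρ ∂μ :=
        setLIntegral_mono' measurableSet_Ioc fun _ hr => mul_le_mul_right (hh hr.1 hρ hr.2) _
    _ = (∫⁻ r in Ioc c ρ, φ r ∂μ) * h ρ := lintegral_mul_const _ hφ
    _ ≤ (∫⁻ r in Ioi ρ, φ r ∂μ) * h ρ := mul_le_mul_left hφρ _
    _ = ∫⁻ r in Ioi ρ, φ r * h ρ ∂μ := (lintegral_mul_const _ hφ).symm
    _ ≤ ∫⁻ r in Ioi ρ, φ r * h r ∂μ :=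
        setLIntegral_mono' measurableSet_Ioi fun _ hr =>
          mul_le_mul_right (hh hρ (hρ.trans hr) hr.le) _

theorem monotoneOn_cosh_mul (c : ℝ) : MonotoneOn (fun r => cosh (r * c)) (Ici 0) :=
  fun r hr r' hr' hrr' => cosh_le_cosh.mpr <| by
    rw [abs_mul, abs_mul, abs_of_nonneg (mem_Ici.mp hr), abs_of_nonneg (mem_Ici.mp hr')]
    exact mul_le_mul_of_nonneg_right hrr' (abs_nonneg c)

namespace Complex

theorem inner_polarCoord_symm (b : ℂ) (r θ : ℝ) :
    inner ℝ b (Complex.polarCoord.symm (r, θ)) = r * (b.re * Real.cos θ + b.im * Real.sin θ) := by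
  simp [Complex.inner, Complex.polarCoord_symm_apply, Complex.cos_ofReal_re, Complex.sin_ofReal_re]
  ring

theorem setLIntegral_norm_preimage_eq_polar {G : ℂ → ℝ≥0∞} (hG : Measurable G) {s : Set ℝ}
    (hs : MeasurableSet s) (hs0 : s ⊆ Ioi 0) :
    ∫⁻ u in norm ⁻¹' s, G u =
      ∫⁻ θ in Ioo (-π) π, ∫⁻ r in s, ENNReal.ofReal r * G (Complex.polarCoord.symm (r, θ)) := by
  have hpolar : Measurable fun p : ℝ × ℝ => Complex.polarCoord.symm p := by
    simp only [Complex.polarCoord_symm_apply]; fun_prop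
  rw [← lintegral_indicator (measurable_norm hs), ← Complex.lintegral_comp_polarCoord_symm,
    polarCoord_target, Measure.volume_eq_prod, ← Measure.prod_restrict,
    lintegral_prod_symm _ ?_]
  · refine lintegral_congr fun θ => ?_
    rw [← inter_eq_self_of_subset_left hs0, ← Measure.restrict_restrict hs,
      ← lintegral_indicator hs, inter_eq_self_of_subset_left hs0]
    refine setLIntegral_congr_fun measurableSet_Ioi fun r (hr : 0 < r) => ?_
    have hnorm : ‖Complex.polarCoord.symm (r, θ)‖ = r := by
      rw [Complex.norm_polarCoord_symm, abs_of_pos hr]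
    have hmem : Complex.polarCoord.symm (r, θ) ∈ norm ⁻¹' s ↔ r ∈ s := by
      rw [mem_preimage, hnorm]
    by_cases hrs : r ∈ s
    · rw [indicator_of_mem (hmem.mpr hrs), indicator_of_mem hrs, smul_eq_mul]
    · rw [indicator_of_notMem (mt hmem.mp hrs), indicator_of_notMem hrs, smul_zero]
  · exact ((measurable_fst.ennreal_ofReal.smul
      ((hG.indicator (measurable_norm hs)).comp hpolar))).aemeasurable

theorem setLIntegral_cosh_inner_mul_radial_le {k : ℝ → ℝ≥0∞} (hk : Measurable k) (b : ℂ)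
    {ρ : ℝ} (hρ : 0 < ρ)
    (hkρ : ∫⁻ r in Ioc 0 ρ, ENNReal.ofReal r * k r ≤ ∫⁻ r in Ioi ρ, ENNReal.ofReal r * k r) :
    ∫⁻ u in {u : ℂ | ‖u‖ ≤ ρ}, ENNReal.ofReal (Real.cosh (inner ℝ b u)) * k ‖u‖ ≤
      ∫⁻ u in {u : ℂ | ρ < ‖u‖}, ENNReal.ofReal (Real.cosh (inner ℝ b u)) * k ‖u‖ := by
  have hG : Measurable fun u : ℂ => ENNReal.ofReal (Real.cosh (inner ℝ b u)) * k ‖u‖ := by fun_prop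
  have hball : {u : ℂ | ‖u‖ ≤ ρ} =ᵐ[volume] norm ⁻¹' Ioc 0 ρ := by
    filter_upwards [compl_mem_ae_iff.mpr (measure_singleton (0 : ℂ))] with u (hu : u ≠ 0)
    change (‖u‖ ≤ ρ) = (0 < ‖u‖ ∧ ‖u‖ ≤ ρ)
    simp [norm_pos_iff.mpr hu]
  have hpolar : ∀ θ r, 0 < r → ENNReal.ofReal r *
      (ENNReal.ofReal (Real.cosh (inner ℝ b (Complex.polarCoord.symm (r, θ)))) *
        k ‖Complex.polarCoord.symm (r, θ)‖) =
      ENNReal.ofReal r * k r *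
        ENNReal.ofReal (Real.cosh (r * (b.re * Real.cos θ + b.im * Real.sin θ))) := by
    intro θ r hr
    rw [inner_polarCoord_symm, Complex.norm_polarCoord_symm, abs_of_pos hr]
    ring
  rw [setLIntegral_congr hball, show {u : ℂ | ρ < ‖u‖} = norm ⁻¹' Ioi ρ from rfl,
    setLIntegral_norm_preimage_eq_polar hG measurableSet_Ioc fun r hr => hr.1,
    setLIntegral_norm_preimage_eq_polar hG measurableSet_Ioi (Ioi_subset_Ioi hρ.le)]
  refine lintegral_mono fun θ => ?_
  rw [setLIntegral_congr_fun measurableSet_Ioc fun r hr => hpolar θ r hr.1,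
    setLIntegral_congr_fun measurableSet_Ioi fun r hr => hpolar θ r (hρ.trans hr)]
  exact setLIntegral_Ioc_mul_le_Ioi_mul_of_monotoneOn (by fun_prop)
    (fun r hr r' hr' hrr' => ENNReal.ofReal_le_ofReal
      (monotoneOn_cosh_mul _ (mem_Ici_of_Ioi hr) (mem_Ici_of_Ioi hr') hrr')) hρ hkρ

end Complex

theorem setLIntegral_cosh_inner_mul_radial_le {k : ℝ → ℝ≥0∞} (hk : Measurable k) (b : E2)
    {ρ : ℝ} (hρ : 0 < ρ)
    (hkρ : ∫⁻ r in Ioc 0 ρ, ENNReal.ofReal r * k r ≤ ∫⁻ r in Ioi ρ, ENNReal.ofReal r * k r) :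
    ∫⁻ u in {u : E2 | ‖u‖ ≤ ρ}, ENNReal.ofReal (cosh (inner ℝ b u)) * k ‖u‖ ≤
      ∫⁻ u in {u : E2 | ρ < ‖u‖}, ENNReal.ofReal (cosh (inner ℝ b u)) * k ‖u‖ := by
  set T : ℂ ≃ₗᵢ[ℝ] E2 := Complex.orthonormalBasisOneI.repr
  have hT : ∀ s : Set ℝ, ∫⁻ u in norm ⁻¹' s, ENNReal.ofReal (cosh (inner ℝ b u)) * k ‖u‖ =
      ∫⁻ z in norm ⁻¹' s, ENNReal.ofReal (cosh (inner ℝ (T.symm b) z)) * k ‖z‖ := fun s => by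
    rw [← T.measurePreserving.setLIntegral_comp_preimage_emb T.toHomeomorph.measurableEmbedding]
    have hpre : T ⁻¹' (norm ⁻¹' s) = norm ⁻¹' s := by ext z; simp
    have hinner : ∀ z, inner ℝ b (T z) = inner ℝ (T.symm b) z := fun z => by
      rw [← T.inner_map_map, T.apply_symm_apply]
    simp only [hpre, LinearIsometryEquiv.norm_map, hinner]
  exact (hT (Iic ρ)).trans_le <|
    (Complex.setLIntegral_cosh_inner_mul_radial_le hk _ hρ hkρ).trans_eq (hT (Ioi ρ)).symm

theorem integrable_exp_neg_mul_sq_norm {V : Type*} [NormedAddCommGroup V] [InnerProductSpace ℝ V]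
    [FiniteDimensional ℝ V] [MeasurableSpace V] [BorelSpace V] {a : ℝ} (ha : 0 < a) :
    Integrable fun v : V => exp (-a * ‖v‖ ^ 2) :=
  Integrable.of_integral_ne_zero <| by
    rw [GaussianFourier.integral_rexp_neg_mul_sq_norm ha]; positivity

theorem exp_neg_mul_norm_add_sq_add_exp_neg_mul_norm_sub_sq {F : Type*} [NormedAddCommGroup F]
    [InnerProductSpace ℝ F] (a : ℝ) (v u : F) :
    exp (-a * ‖v + u‖ ^ 2) + exp (-a * ‖v - u‖ ^ 2) =
      2 * exp (-a * ‖v‖ ^ 2) * exp (-a * ‖u‖ ^ 2) * cosh (2 * a * inner ℝ v u) := by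
  rw [norm_add_sq_real, norm_sub_sq_real, cosh_eq]
  field_simp
  simp only [mul_add, ← exp_add]
  ring_nf

section Planar

variable {a ξ : ℝ}

theorem two_mul_setLIntegral_eq_cosh (a ξ : ℝ) (v : E2) (s : Set ℝ) :
    2 * ∫⁻ w in {w : E2 | ‖w - v‖ ∈ s},
        ENNReal.ofReal (exp (-a * ‖w‖ ^ 2) / √(‖v - w‖ ^ 2 + ξ ^ 2)) =
      ENNReal.ofReal (2 * exp (-a * ‖v‖ ^ 2)) * ∫⁻ u in norm ⁻¹' s,
        ENNReal.ofReal (cosh (inner ℝ ((2 * a) • v) u)) *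
          ENNReal.ofReal (exp (-a * ‖u‖ ^ 2) / √(‖u‖ ^ 2 + ξ ^ 2)) := by
  set f : E2 → ℝ≥0∞ := fun w => ENNReal.ofReal (exp (-a * ‖w‖ ^ 2) / √(‖v - w‖ ^ 2 + ξ ^ 2))
  have hf : Measurable f := by fun_prop
  have htrans : ∫⁻ w in {w : E2 | ‖w - v‖ ∈ s}, f w = ∫⁻ u in norm ⁻¹' s, f (v + u) := by
    rw [← (measurePreserving_add_left volume v).setLIntegral_comp_preimage_emb
      (measurableEmbedding_addLeft v)]
    congr! 2
    ext u; simp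
  have hsymm : ∫⁻ u in norm ⁻¹' s, f (v + u) = ∫⁻ u in norm ⁻¹' s, f (v - u) := by
    rw [← (Measure.measurePreserving_neg volume).setLIntegral_comp_preimage_emb
      measurableEmbedding_neg]
    simp [preimage, sub_eq_add_neg]
  have hsum : ∀ u, f (v + u) + f (v - u) = ENNReal.ofReal (2 * exp (-a * ‖v‖ ^ 2)) *
      (ENNReal.ofReal (cosh (inner ℝ ((2 * a) • v) u)) *
        ENNReal.ofReal (exp (-a * ‖u‖ ^ 2) / √(‖u‖ ^ 2 + ξ ^ 2))) := fun u => by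
    simp only [f, sub_add_cancel_left, sub_sub_cancel, norm_neg]
    rw [← ENNReal.ofReal_add (by positivity) (by positivity), ← ENNReal.ofReal_mul (by positivity),
      ← ENNReal.ofReal_mul (by positivity), ← add_div,
      exp_neg_mul_norm_add_sq_add_exp_neg_mul_norm_sub_sq, real_inner_smul_left]
    congr 1
    ring
  rw [htrans, two_mul]
  nth_rw 2 [hsymm]
  rw [← lintegral_add_left (f := fun u => f (v + u)) (by fun_prop), ← lintegral_const_mul]
  · simp only [hsum]
  · fun_prop

theorem setLIntegral_closedBall_le_compl (ha : 0 < a) (hξ : 0 ≤ ξ) {ρ : ℝ} (hρ : 0 < ρ) (v : E2)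
    (h : ∫ s in ξ..√(ρ ^ 2 + ξ ^ 2), exp (-a * s ^ 2) ≤
      ∫ s in Ioi √(ρ ^ 2 + ξ ^ 2), exp (-a * s ^ 2)) :
    ∫⁻ w in {w : E2 | ‖w - v‖ ≤ ρ},
        ENNReal.ofReal (exp (-a * ‖w‖ ^ 2) / √(‖v - w‖ ^ 2 + ξ ^ 2)) ≤
      ∫⁻ w in {w : E2 | ρ < ‖w - v‖},
        ENNReal.ofReal (exp (-a * ‖w‖ ^ 2) / √(‖v - w‖ ^ 2 + ξ ^ 2)) := by
  have hcosh := setLIntegral_cosh_inner_mul_radial_le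
    (k := fun r => ENNReal.ofReal (exp (-a * r ^ 2) / √(r ^ 2 + ξ ^ 2))) (by fun_prop)
    ((2 * a) • v) hρ (setLIntegral_radial_Ioc_le_Ioi ha hξ hρ h)
  rw [← ENNReal.mul_le_mul_iff_right two_ne_zero ENNReal.ofNat_ne_top]
  exact (two_mul_setLIntegral_eq_cosh a ξ v (Iic ρ)).trans_le <|
    (mul_le_mul_right hcosh _).trans_eq (two_mul_setLIntegral_eq_cosh a ξ v (Ioi ρ)).symm

theorem setIntegral_closedBall_le_half_integral (ha : 0 < a) (hξ : 0 ≤ ξ) {ρ : ℝ} (hρ : 0 < ρ)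
    (v : E2)
    (h : ∫ s in ξ..√(ρ ^ 2 + ξ ^ 2), exp (-a * s ^ 2) ≤
      ∫ s in Ioi √(ρ ^ 2 + ξ ^ 2), exp (-a * s ^ 2)) :
    ∫ w in {w : E2 | ‖w - v‖ ≤ ρ}, exp (-a * ‖w‖ ^ 2) / √(‖v - w‖ ^ 2 + ξ ^ 2) ≤
      1 / 2 * ∫ w : E2, exp (-a * ‖w‖ ^ 2) / √(‖v - w‖ ^ 2 + ξ ^ 2) := by
  set f : E2 → ℝ := fun w => exp (-a * ‖w‖ ^ 2) / √(‖v - w‖ ^ 2 + ξ ^ 2)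
  have hf0 : 0 ≤ᵐ[volume] f := ae_of_all _ fun w => by positivity
  have hfm : AEStronglyMeasurable f := (by fun_prop : Measurable f).aestronglyMeasurable
  set S := {w : E2 | ‖w - v‖ ≤ ρ}
  have hS : MeasurableSet S := measurableSet_le (by fun_prop) measurable_const
  have hSc : Sᶜ = {w : E2 | ρ < ‖w - v‖} := by ext; simp [S]
  have hAC : ∫⁻ w in S, ENNReal.ofReal (f w) ≤ ∫⁻ w in Sᶜ, ENNReal.ofReal (f w) :=
    hSc ▸ setLIntegral_closedBall_le_compl ha hξ hρ v h
  have hC : ∫⁻ w in Sᶜ, ENNReal.ofReal (f w) ≠ ⊤ := by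
    refine ne_top_of_le_ne_top
      ((integrable_exp_neg_mul_sq_norm ha).const_mul ρ⁻¹).lintegral_lt_top.ne
      ((setLIntegral_mono' hS.compl fun w hw => ENNReal.ofReal_le_ofReal ?_).trans
        (setLIntegral_le_lintegral _ _))
    have hw : ρ < ‖v - w‖ := by rw [norm_sub_rev]; simpa [S] using hw
    rw [inv_mul_eq_div]
    exact div_le_div_of_nonneg_left (exp_pos _).le hρ
      (hw.le.trans (le_sqrt_of_sq_le (le_add_of_nonneg_right (sq_nonneg ξ))))
  rw [integral_eq_lintegral_of_nonneg_ae hf0 hfm, integral_eq_lintegral_of_nonneg_ae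
    (ae_restrict_of_ae hf0) hfm.restrict, ← lintegral_add_compl (μ := volume) _ hS,
    ENNReal.toReal_add (hAC.trans_lt hC.lt_top).ne hC]
  linarith [ENNReal.toReal_mono hC hAC]

end Planar

/-- Planar Gaussian convolution cut-off lemma with quantitative radius:
with `a = m₁/(2Θ₁)` and `κ ∈ (0,1)`, for every `ρ₀ > 0` there exists `ρ₁ > 0` such that for
all `v̄ ∈ ℝ²` and `ξ ∈ [0, ρ₀/(2κ)]`,
`∫_{|w̄-v̄| ≤ ρ₁} e^{-a|w̄|²}/√(|v̄-w̄|²+ξ²) ≤ (1/2) ∫_{ℝ²} e^{-a|w̄|²}/√(|v̄-w̄|²+ξ²)`;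
moreover, with `η = √(2Θ₁/m₁) · erf⁻¹(1/2)`, whenever `0 < ρ₀ < 2κη` the radius `ρ₁` can be
chosen with `ρ₁ ≥ √(η² - ρ₀²/(4κ²))`. -/
theorem planar_gaussian_cutoff
    (m1 Θ1 : ℝ) (hm1 : 0 < m1) (hΘ1 : 0 < Θ1)
    (a : ℝ) (ha : a = m1 / (2 * Θ1))
    (κ : ℝ) (hκ : κ ∈ Set.Ioo (0 : ℝ) 1)
    (r0 : ℝ) (hr0 : 0 < r0)
    (hr0erf : (2 / Real.sqrt π) * (∫ t in (0 : ℝ)..r0, Real.exp (-t ^ 2)) = 1 / 2)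
    (η : ℝ) (hη : η = Real.sqrt (2 * Θ1 / m1) * r0) :
    ∀ ρ0 : ℝ, 0 < ρ0 → ∃ ρ1 : ℝ, 0 < ρ1 ∧
      (∀ (v : E2) (ξ : ℝ), ξ ∈ Set.Icc (0 : ℝ) (ρ0 / (2 * κ)) →
        (∫ w in {w : E2 | ‖w - v‖ ≤ ρ1},
            Real.exp (-a * ‖w‖ ^ 2) / Real.sqrt (‖v - w‖ ^ 2 + ξ ^ 2)) ≤
          (1 / 2) * ∫ w : E2,
            Real.exp (-a * ‖w‖ ^ 2) / Real.sqrt (‖v - w‖ ^ 2 + ξ ^ 2)) ∧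
      (ρ0 < 2 * κ * η → Real.sqrt (η ^ 2 - ρ0 ^ 2 / (4 * κ ^ 2)) ≤ ρ1) := by
  intro ρ0 hρ0
  have hκ0 : 0 < κ := hκ.1
  have ha0 : 0 < a := by rw [ha]; positivity
  have hη0 : 0 < η := by rw [hη]; positivity
  have hmedian : ∫ s in (0 : ℝ)..η, exp (-a * s ^ 2) = ∫ s in Ioi η, exp (-a * s ^ 2) := by
    refine intervalIntegral_exp_neg_mul_sq_eq_integral_Ioi_of_erf ha0 hr0erf ?_ hη0.le
    rw [hη, ← mul_assoc, ← sqrt_mul ha0.le, ha, div_mul_div_comm, mul_comm m1,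
      div_self (by positivity), sqrt_one, one_mul]
  by_cases hc : ρ0 < 2 * κ * η
  · have hρ1 : 0 < η ^ 2 - ρ0 ^ 2 / (4 * κ ^ 2) := by
      rw [sub_pos, div_lt_iff₀ (by positivity)]
      nlinarith
    refine ⟨_, sqrt_pos.mpr hρ1, fun v ξ hξ => setIntegral_closedBall_le_half_integral ha0 hξ.1
      (sqrt_pos.mpr hρ1) v ?_, fun _ => le_rfl⟩
    refine intervalIntegral_exp_neg_mul_sq_le_integral_Ioi_of_median ha0 hξ.1 hη0.le ?_ hmedian
    have hξ2 : ξ ^ 2 ≤ ρ0 ^ 2 / (4 * κ ^ 2) := by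
      rw [show ρ0 ^ 2 / (4 * κ ^ 2) = (ρ0 / (2 * κ)) ^ 2 by ring]
      exact pow_le_pow_left₀ hξ.1 hξ.2 2
    rw [sq_sqrt hρ1.le]
    linarith
  · obtain ⟨ρ1, hρ1, hsmall⟩ :=
      exists_pos_forall_intervalIntegral_exp_neg_mul_sq_le_integral_Ioi ha0 (ρ0 / (2 * κ))
    exact ⟨ρ1, hρ1, fun v ξ hξ =>
      setIntegral_closedBall_le_half_integral ha0 hξ.1 hρ1 v (hsmall ξ hξ), fun h => absurd h hc⟩
end
end

section
/- Lower bound for the planar Gaussian potential: let a = m₁/(2Θ₁), κ ∈ (0,1) and ρ₀ > 0. There exists a constant C > 0 (depending only on a, κ and ρ₀) such that for all v̄ ∈ ℝ² and all ξ ∈ [0, ρ₀/(2κ)], ∫_{ℝ²} exp(−a|w̄|²)/√(|v̄−w̄|² + ξ²) dw̄ ≥ C/(1 + |v̄|). -/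
/-!
On the unit ball the Gaussian weight is at least `e^{-a}` and, for `0 ≤ ξ ≤ M`,
`√(|v̄ - w̄|² + ξ²) ≤ 1 + |v̄| + M ≤ (1 + M)(1 + |v̄|)`; integrating over the unit ball alone gives
the bound. The substance is integrability, without which the Bochner integral would be `0`: for
`ξ = 0` the integrand is dominated by `e^{-a|w̄|²} |v̄ - w̄|⁻¹`, and `|x|⁻¹` is locally integrable
in dimension at least two.
-/

open MeasureTheory Real

noncomputable section

open Metric Set

section InvNorm

variable {E : Type*} [NormedAddCommGroup E] [NormedSpace ℝ E] [FiniteDimensional ℝ E]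
  [MeasurableSpace E] [BorelSpace E] {μ : Measure E} [μ.IsAddHaarMeasure]

theorem integrable_mul_inv_norm (hE : 1 < Module.finrank ℝ E) {φ : E → ℝ} {C : ℝ}
    (hφ : Integrable φ μ) (hφC : ∀ x, ‖φ x‖ ≤ C) :
    Integrable (fun x => φ x * ‖x‖⁻¹) μ := by
  have hmeas : AEStronglyMeasurable (fun x => φ x * ‖x‖⁻¹) μ :=
    hφ.1.mul (by fun_prop)
  rw [← integrableOn_univ, ← union_compl_self (ball 0 1)]
  refine (integrableOn_ball_of_norm_le_rpow (C := C) (α := 1) hE.le (by exact_mod_cast hE)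
    (ae_of_all _ fun x => ?_) hmeas).union ?_
  · rw [norm_mul, norm_inv, norm_norm, Real.rpow_neg_one]
    exact mul_le_mul_of_nonneg_right (hφC x) (by positivity)
  · refine hφ.norm.integrableOn.mono' hmeas.restrict ?_
    filter_upwards [ae_restrict_mem measurableSet_ball.compl] with x hx
    have hx1 : 1 ≤ ‖x‖ := by simpa using hx
    rw [norm_mul, norm_inv, norm_norm]
    exact mul_le_of_le_one_right (norm_nonneg _) (inv_le_one_of_one_le₀ hx1)

end InvNorm

theorem sqrt_norm_sub_sq_add_sq_le {F : Type*} [SeminormedAddCommGroup F] {v w : F} {ξ M : ℝ}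
    (hw : ‖w‖ ≤ 1) (hξ : ξ ∈ Icc 0 M) :
    √(‖v - w‖ ^ 2 + ξ ^ 2) ≤ (1 + M) * (1 + ‖v‖) := by
  have hvw : ‖v - w‖ ≤ 1 + ‖v‖ := (norm_sub_le v w).trans (by linarith)
  have hM : 0 ≤ M * ‖v‖ := mul_nonneg (hξ.1.trans hξ.2) (norm_nonneg v)
  rw [Real.sqrt_le_left (by nlinarith [hξ.1, hξ.2, norm_nonneg v])]
  nlinarith [hξ.1, hξ.2, norm_nonneg v, norm_nonneg (v - w)]

theorem exp_neg_div_le_exp_neg_mul_sq_norm_div_sqrt {F : Type*} [NormedAddCommGroup F]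
    {b M ξ : ℝ} {v w : F} (hb : 0 ≤ b) (hw : ‖w‖ ≤ 1) (hwv : w ≠ v) (hξ : ξ ∈ Icc 0 M) :
    Real.exp (-b) / ((1 + M) * (1 + ‖v‖)) ≤
      Real.exp (-b * ‖w‖ ^ 2) / √(‖v - w‖ ^ 2 + ξ ^ 2) := by
  have hpos : 0 < ‖v - w‖ := norm_pos_iff.mpr (sub_ne_zero.mpr hwv.symm)
  refine div_le_div₀ (Real.exp_pos _).le ?_ (by positivity) (sqrt_norm_sub_sq_add_sq_le hw hξ)
  rw [Real.exp_le_exp]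
  nlinarith [mul_le_mul_of_nonneg_left (pow_le_one₀ (norm_nonneg w) hw : ‖w‖ ^ 2 ≤ 1) hb]

section GaussianPotential

variable {V : Type*} [NormedAddCommGroup V] [InnerProductSpace ℝ V] [FiniteDimensional ℝ V]
  [MeasurableSpace V] [BorelSpace V]

theorem integrable_exp_neg_mul_sq_norm_s19 {b : ℝ} (hb : 0 < b) :
    Integrable (fun w : V => Real.exp (-b * ‖w‖ ^ 2)) := by
  refine Integrable.of_integral_ne_zero ?_
  rw [GaussianFourier.integral_rexp_neg_mul_sq_norm hb]
  positivity

theorem integrable_exp_neg_mul_sq_norm_div_sqrt (hV : 1 < Module.finrank ℝ V) {b : ℝ}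
    (hb : 0 < b) (v : V) (ξ : ℝ) :
    Integrable (fun w : V => Real.exp (-b * ‖w‖ ^ 2) / √(‖v - w‖ ^ 2 + ξ ^ 2)) := by
  have hbound (x : V) : ‖Real.exp (-b * ‖x + v‖ ^ 2)‖ ≤ 1 := by
    rw [Real.norm_eq_abs, abs_of_pos (Real.exp_pos _), Real.exp_le_one_iff]
    nlinarith [sq_nonneg ‖x + v‖]
  have hdom : Integrable (fun w : V => Real.exp (-b * ‖w‖ ^ 2) * ‖w - v‖⁻¹) := by
    simpa using (integrable_mul_inv_norm hV
      ((integrable_exp_neg_mul_sq_norm_s19 hb).comp_add_right v) hbound).comp_sub_right v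
  have : Nontrivial V := Module.nontrivial_of_finrank_pos (R := ℝ) (by omega)
  refine hdom.mono' (Measurable.aestronglyMeasurable (by fun_prop)) ?_
  filter_upwards [Measure.ae_ne volume v] with w hwv
  have hpos : 0 < ‖w - v‖ := norm_pos_iff.mpr (sub_ne_zero.mpr hwv)
  have hle : ‖w - v‖ ≤ √(‖v - w‖ ^ 2 + ξ ^ 2) :=
    Real.le_sqrt_of_sq_le (by rw [norm_sub_rev]; nlinarith [sq_nonneg ξ])
  rw [Real.norm_eq_abs, abs_of_nonneg (by positivity), div_eq_mul_inv]
  gcongr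

theorem exists_pos_div_one_add_norm_le_integral_exp_neg_mul_sq_norm_div_sqrt
    (hV : 1 < Module.finrank ℝ V) {b M : ℝ} (hb : 0 < b) (hM : 0 ≤ M) :
    ∃ C : ℝ, 0 < C ∧ ∀ (v : V) (ξ : ℝ), ξ ∈ Icc 0 M →
      C / (1 + ‖v‖) ≤ ∫ w : V, Real.exp (-b * ‖w‖ ^ 2) / √(‖v - w‖ ^ 2 + ξ ^ 2) := by
  have hball : 0 < volume.real (ball (0 : V) 1) :=
    ENNReal.toReal_pos (measure_ball_pos volume 0 one_pos).ne' measure_ball_lt_top.ne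
  refine ⟨Real.exp (-b) / (1 + M) * volume.real (ball (0 : V) 1), by positivity,
    fun v ξ hξ => ?_⟩
  have : Nontrivial V := Module.nontrivial_of_finrank_pos (R := ℝ) (by omega)
  set f := fun w : V => Real.exp (-b * ‖w‖ ^ 2) / √(‖v - w‖ ^ 2 + ξ ^ 2)
  have hf : Integrable f := integrable_exp_neg_mul_sq_norm_div_sqrt hV hb v ξ
  calc Real.exp (-b) / (1 + M) * volume.real (ball (0 : V) 1) / (1 + ‖v‖)
      = ∫ _ in ball (0 : V) 1, Real.exp (-b) / ((1 + M) * (1 + ‖v‖)) := by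
        rw [setIntegral_const, smul_eq_mul]
        field_simp
    _ ≤ ∫ w in ball (0 : V) 1, f w := by
        refine setIntegral_mono_on_ae (integrableOn_const measure_ball_lt_top.ne)
          hf.integrableOn measurableSet_ball ?_
        filter_upwards [Measure.ae_ne volume v] with w hwv hw
        exact exp_neg_div_le_exp_neg_mul_sq_norm_div_sqrt hb.le
          (mem_ball_zero_iff.mp hw).le hwv hξ
    _ ≤ ∫ w, f w := setIntegral_le_integral hf (ae_of_all _ fun w => by positivity)

end GaussianPotential

/-- Lower bound for the planar Gaussian potential: with `a = m₁/(2Θ₁)`,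
`κ ∈ (0,1)` and `ρ₀ > 0`, there exists `C > 0` such that for all `v̄ ∈ ℝ²` and all
`ξ ∈ [0, ρ₀/(2κ)]`, `∫_{ℝ²} e^{-a|w̄|²}/√(|v̄-w̄|²+ξ²) dw̄ ≥ C/(1+|v̄|)`. -/
theorem planar_gaussian_potential_lower_bound
    (m1 Θ1 : ℝ) (hm1 : 0 < m1) (hΘ1 : 0 < Θ1)
    (a : ℝ) (ha : a = m1 / (2 * Θ1))
    (κ : ℝ) (hκ : κ ∈ Set.Ioo (0 : ℝ) 1)
    (ρ0 : ℝ) (hρ0 : 0 < ρ0) :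
    ∃ C : ℝ, 0 < C ∧ ∀ (v : E2) (ξ : ℝ), ξ ∈ Set.Icc (0 : ℝ) (ρ0 / (2 * κ)) →
      C / (1 + ‖v‖) ≤
        ∫ w : E2, Real.exp (-a * ‖w‖ ^ 2) / Real.sqrt (‖v - w‖ ^ 2 + ξ ^ 2) := by
  have ha_pos : 0 < a := ha ▸ by positivity
  have hM : 0 ≤ ρ0 / (2 * κ) := by
    have := hκ.1
    positivity
  exact exists_pos_div_one_add_norm_le_integral_exp_neg_mul_sq_norm_div_sqrt
    (by simp) ha_pos hM
end
end
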